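/- In the binary icosahedral group 𝕀̃ one has s³ = t⁵ = (st)², this common element equals −1 ∈ ℍ, and the group 𝕀̃ has exactly 120 elements. -/

import Mathlib

noncomputable section

/-- The golden ratio φ = (1+√5)/2. -/
def phiGolden : ℝ := (1 + Real.sqrt 5) / 2

/-- The quaternion s = (1 + i + j + k)/2. -/
def sQuat : Quaternion ℝ := ⟨1/2, 1/2, 1/2, 1/2⟩

/-- The quaternion t = (φ + φ⁻¹·i + j)/2. -/
def tQuat : Quaternion ℝ := ⟨phiGolden / 2, phiGolden⁻¹ / 2, 1/2, 0⟩

/-- The binary icosahedral group: the subgroup of the units of the quaternions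
generated by s and t. -/
def binaryIcosahedral : Subgroup (Quaternion ℝ)ˣ :=
  Subgroup.closure {u : (Quaternion ℝ)ˣ | (u : Quaternion ℝ) = sQuat ∨ (u : Quaternion ℝ) = tQuat}

/-!
The coordinates of `s` and `t` lie in `ℚ(φ)`, so `𝕀̃` is the image of the group generated by the
corresponding quaternions over `ℚ(φ)` under the injective ring map `ℍ[ℚ(φ)] → ℍ[ℝ]`. Over `ℚ(φ)`
arithmetic is exact and decidable: the relations are direct computations, and since `s` and `t`
have finite order the group they generate is the orbit of `1` under left multiplication by `s`
and `t`, which a breadth-first search finds to consist of 120 elements.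
-/

open Quaternion

section Explore

variable {M : Type*} [Monoid M] [DecidableEq M] (gens : List M)

/-- One round of breadth-first search from `1` along left multiplication by `gens`: `p.1` lists
the elements found so far and `p.2` those found in the previous round. -/
def exploreStep (p : List M × List M) : List M × List M :=
  let next := ((gens.flatMap fun g => p.2.map (g * ·)).filter (· ∉ p.1)).dedup
  (p.1 ++ next, next)

def explore (n : ℕ) : List M × List M := (exploreStep gens)^[n] ([1], [1])

structure ExploreInv (p : List M × List M) : Prop where
  one_mem : (1 : M) ∈ p.1
  frontier_subset : p.2 ⊆ p.1
  nodup : p.1.Nodup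
  mem_closure : ∀ x ∈ p.1, x ∈ Submonoid.closure {g | g ∈ gens}
  mul_mem_of_not_mem : ∀ x ∈ p.1, x ∉ p.2 → ∀ g ∈ gens, g * x ∈ p.1

variable {gens}

theorem mem_exploreStep_snd {p : List M × List M} {y : M} :
    y ∈ (exploreStep gens p).2 ↔ y ∉ p.1 ∧ ∃ g ∈ gens, ∃ x ∈ p.2, g * x = y := by
  simp [exploreStep, and_comm]

theorem ExploreInv.exploreStep {p : List M × List M} (h : ExploreInv gens p) :
    ExploreInv gens (exploreStep gens p) where
  one_mem := List.mem_append_left _ h.one_mem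
  frontier_subset := List.subset_append_right _ _
  nodup := List.nodup_append.2 ⟨h.nodup, List.nodup_dedup _,
    fun x hx y hy hxy => (mem_exploreStep_snd.1 hy).1 (hxy ▸ hx)⟩
  mem_closure x hx := by
    rcases List.mem_append.1 hx with hx | hx
    · exact h.mem_closure x hx
    · obtain ⟨-, g, hg, y, hy, rfl⟩ := mem_exploreStep_snd.1 hx
      exact mul_mem (Submonoid.subset_closure hg) (h.mem_closure y (h.frontier_subset hy))
  mul_mem_of_not_mem x hx hxn g hg := by
    have hx : x ∈ p.1 := (List.mem_append.1 hx).resolve_right hxn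
    by_cases hxf : x ∈ p.2
    · by_cases hgx : g * x ∈ p.1
      · exact List.mem_append_left _ hgx
      · exact List.mem_append_right _ (mem_exploreStep_snd.2 ⟨hgx, g, hg, x, hxf, rfl⟩)
    · exact List.mem_append_left _ (h.mul_mem_of_not_mem x hx hxf g hg)

theorem exploreInv_explore (n : ℕ) : ExploreInv gens (explore gens n) := by
  induction n with
  | zero => exact ⟨List.mem_singleton_self 1, List.Subset.refl _, List.nodup_singleton 1,
      by simp [explore, one_mem], by simp [explore]⟩
  | succ n ih => rw [explore, Function.iterate_succ_apply']; exact ih.exploreStep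

theorem coe_closure_eq_of_explore_snd_eq_nil {n : ℕ} (h : (explore gens n).2 = []) :
    (Submonoid.closure {g | g ∈ gens} : Set M) = {x | x ∈ (explore gens n).1} := by
  have inv := exploreInv_explore (gens := gens) n
  refine subset_antisymm (fun x hx => ?_) inv.mem_closure
  induction hx using Submonoid.closure_induction_left with
  | one => exact inv.one_mem
  | mul_left g hg y _ hy => exact inv.mul_mem_of_not_mem y hy (by simp [h]) g hg

theorem card_closure_eq_length_explore {n : ℕ} (h : (explore gens n).2 = []) :
    Nat.card (Submonoid.closure {g | g ∈ gens}) = (explore gens n).1.length := by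
  rw [← SetLike.coe_sort_coe, coe_closure_eq_of_explore_snd_eq_nil h, ← List.coe_toFinset,
    Nat.card_coe_set_eq, Set.ncard_coe_finset,
    List.toFinset_card_of_nodup (exploreInv_explore n).nodup]

end Explore

theorem Submonoid.card_closure_image_of_injective {M N : Type*} [Monoid M] [Monoid N]
    {f : M →* N} (hf : Function.Injective f) (s : Set M) :
    Nat.card (closure (f '' s)) = Nat.card (closure s) := by
  rw [← MonoidHom.map_mclosure]
  exact Nat.card_congr (Submonoid.equivMapOfInjective _ f hf).toEquiv.symm

theorem Subgroup.card_closure_preimage_val {M : Type*} [Monoid M] {T : Set M}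
    (hT : ∀ x ∈ T, IsOfFinOrder x) :
    Nat.card (closure (Units.val ⁻¹' T)) = Nat.card (Submonoid.closure T) := by
  have hval : Units.coeHom M '' (Units.val ⁻¹' T) = T :=
    Set.image_preimage_eq_of_subset fun x hx => ⟨(hT x hx).isUnit.unit, rfl⟩
  calc Nat.card (closure (Units.val ⁻¹' T))
      = Nat.card (Submonoid.closure (Units.val ⁻¹' T)) := by
        rw [← closure_toSubmonoid_of_isOfFinOrder (s := Units.val ⁻¹' T)
          fun u hu => Units.isOfFinOrder_val.1 (hT _ hu)]
        rfl
    _ = Nat.card (Submonoid.closure T) := by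
        rw [← Submonoid.card_closure_image_of_injective Units.coeHom_injective, hval]

namespace Quaternion

variable {R S : Type*} [CommRing R] [CommRing S]

instance [DecidableEq R] : DecidableEq ℍ[R] := (Quaternion.equivProd R).decidableEq

def map (f : R →+* S) (q : ℍ[R]) : ℍ[S] := ⟨f q.re, f q.imI, f q.imJ, f q.imK⟩

@[simp] theorem re_map (f : R →+* S) (q : ℍ[R]) : (map f q).re = f q.re := rfl
@[simp] theorem imI_map (f : R →+* S) (q : ℍ[R]) : (map f q).imI = f q.imI := rfl
@[simp] theorem imJ_map (f : R →+* S) (q : ℍ[R]) : (map f q).imJ = f q.imJ := rfl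
@[simp] theorem imK_map (f : R →+* S) (q : ℍ[R]) : (map f q).imK = f q.imK := rfl

def mapRingHom (f : R →+* S) : ℍ[R] →+* ℍ[S] where
  toFun := map f
  map_one' := by ext <;> simp
  map_mul' x y := by ext <;> simp
  map_zero' := by ext <;> simp
  map_add' x y := by ext <;> simp

theorem mapRingHom_apply (f : R →+* S) (q : ℍ[R]) : mapRingHom f q = map f q := rfl

theorem mapRingHom_injective {f : R →+* S} (hf : Function.Injective f) :
    Function.Injective (mapRingHom f) := fun x y h => by
  ext
  exacts [hf (congrArg (·.re) h), hf (congrArg (·.imI) h), hf (congrArg (·.imJ) h),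
    hf (congrArg (·.imK) h)]

end Quaternion

/-- `ℚ(φ)`, with `ω = φ` satisfying `ω² = 1 + ω`. -/
abbrev GoldenField := QuadraticAlgebra ℚ 1 1

namespace GoldenField

open Real

def toReal : GoldenField →+* ℝ :=
  (QuadraticAlgebra.lift ⟨goldenRatio, by simp [← sq, goldenRatio_sq, add_comm]⟩).toRingHom

theorem toReal_apply (z : GoldenField) : toReal z = z.re + z.im * goldenRatio := by
  simp [toReal, Algebra.smul_def]

theorem toReal_injective : Function.Injective toReal := by
  rw [injective_iff_map_eq_zero]
  intro z hz
  rw [toReal_apply] at hz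
  have him : z.im = 0 := by
    by_contra h
    exact goldenRatio_irrational
      ⟨-z.re / z.im, by push_cast; rw [div_eq_iff (by exact_mod_cast h)]; linarith⟩
  ext
  · simpa [him] using hz
  · exact him

end GoldenField

def icosianS : ℍ[GoldenField] := ⟨⟨1/2, 0⟩, ⟨1/2, 0⟩, ⟨1/2, 0⟩, ⟨1/2, 0⟩⟩

/-- `t = (φ + φ⁻¹ i + j) / 2`, using `φ⁻¹ = φ - 1`. -/
def icosianT : ℍ[GoldenField] := ⟨⟨0, 1/2⟩, ⟨-1/2, 1/2⟩, ⟨1/2, 0⟩, 0⟩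

theorem icosianS_pow_three : icosianS ^ 3 = -1 := by decide +kernel

theorem icosianT_pow_five : icosianT ^ 5 = -1 := by decide +kernel

theorem icosianS_mul_icosianT_sq : (icosianS * icosianT) ^ 2 = -1 := by decide +kernel

/-- Every element is a word of length at most 12 in `s` and `t`, so round 13 finds nothing new. -/
theorem explore_icosian :
    (explore [icosianS, icosianT] 13).2 = [] ∧
      (explore [icosianS, icosianT] 13).1.length = 120 := by
  decide +kernel

theorem mapRingHom_icosianS : mapRingHom GoldenField.toReal icosianS = sQuat := by
  ext <;> simp only [mapRingHom_apply, re_map, imI_map, imJ_map, imK_map] <;>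
    simp [icosianS, sQuat, GoldenField.toReal_apply]

theorem phiGolden_inv : phiGolden⁻¹ = phiGolden - 1 := by
  rw [phiGolden, ← Real.goldenRatio, Real.inv_goldenRatio, ← Real.one_sub_goldenConj]
  ring

theorem mapRingHom_icosianT : mapRingHom GoldenField.toReal icosianT = tQuat := by
  ext <;> simp only [mapRingHom_apply, re_map, imI_map, imJ_map, imK_map] <;>
    simp [icosianT, tQuat, GoldenField.toReal_apply, phiGolden_inv] <;> simp [phiGolden] <;> ring

theorem sQuat_pow_three : sQuat ^ 3 = -1 := by
  rw [← mapRingHom_icosianS, ← map_pow, icosianS_pow_three, map_neg, map_one]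

theorem tQuat_pow_five : tQuat ^ 5 = -1 := by
  rw [← mapRingHom_icosianT, ← map_pow, icosianT_pow_five, map_neg, map_one]

theorem sQuat_mul_tQuat_sq : (sQuat * tQuat) ^ 2 = -1 := by
  rw [← mapRingHom_icosianS, ← mapRingHom_icosianT, ← map_mul, ← map_pow,
    icosianS_mul_icosianT_sq, map_neg, map_one]

theorem card_submonoidClosure_sQuat_tQuat :
    Nat.card (Submonoid.closure ({sQuat, tQuat} : Set ℍ[ℝ])) = 120 := by
  have hgens : (mapRingHom GoldenField.toReal).toMonoidHom ''
      {g | g ∈ [icosianS, icosianT]} = {sQuat, tQuat} := by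
    rw [show {g | g ∈ [icosianS, icosianT]} = ({icosianS, icosianT} : Set _) by ext; simp,
      Set.image_pair]
    simp [mapRingHom_icosianS, mapRingHom_icosianT]
  rw [← hgens,
    Submonoid.card_closure_image_of_injective (mapRingHom_injective GoldenField.toReal_injective),
    card_closure_eq_length_explore explore_icosian.1, explore_icosian.2]

/-- In the binary icosahedral group one has s³ = t⁵ = (st)², this common element is
−1, and the group has exactly 120 elements. -/
theorem binaryIcosahedral_relations_card :
    sQuat ^ 3 = tQuat ^ 5 ∧ tQuat ^ 5 = (sQuat * tQuat) ^ 2 ∧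
    (sQuat * tQuat) ^ 2 = -1 ∧
    Nat.card binaryIcosahedral = 120 := by
  refine ⟨sQuat_pow_three.trans tQuat_pow_five.symm, tQuat_pow_five.trans sQuat_mul_tQuat_sq.symm,
    sQuat_mul_tQuat_sq, ?_⟩
  have hfin : ∀ x ∈ ({sQuat, tQuat} : Set ℍ[ℝ]), IsOfFinOrder x := by
    rintro x (rfl | rfl)
    · exact isOfFinOrder_iff_pow_eq_one.2
        ⟨3 * 2, by norm_num, by rw [pow_mul, sQuat_pow_three]; norm_num⟩
    · exact isOfFinOrder_iff_pow_eq_one.2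
        ⟨5 * 2, by norm_num, by rw [pow_mul, tQuat_pow_five]; norm_num⟩
  rw [← card_submonoidClosure_sQuat_tQuat]
  exact Subgroup.card_closure_preimage_val (T := {sQuat, tQuat}) hfin
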